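/- Partition comparison (Lemma 2.6): Suppose Γ satisfies volume control with parameters (α,c_L,c_U). There is a constant C, depending only on α, c_L, c_U, with the following property: let 𝒫 be a countable covering of 𝕍 by balls of radius R ≥ 1 such that every vertex belongs to at most b of its balls, let C₀ > 0, and let 𝒫′ be any countable covering of 𝕍 by balls of radius R′ with R′ ≤ C₀·R. Then for every finite nonempty A ⊆ 𝕍, all symmetric bond weights μ_{xy} ∈ [0,1] and potentials V_x ≥ 0, and every E > 0: N_u^{𝒫,A}(E) ≤ C·(1+C₀)^α·b·N_u^{𝒫′,A}(E). -/

import Mathlib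

open scoped BigOperators

namespace LandscapeGraph

variable {V : Type*}

/-- Ball of real radius `r` with respect to the shortest-path graph metric. -/
def gball (G : SimpleGraph V) (x : V) (r : ℝ) : Set V :=
  {y | G.Reachable x y ∧ (G.dist x y : ℝ) ≤ r}

/-- The degree of a vertex, as a real number. -/
noncomputable def ndeg (G : SimpleGraph V) (x : V) : ℝ := ((G.neighborSet x).ncard : ℝ)

/-- The graph Laplacian `Δf(x) = Σ_{y∼x} (f(y) - f(x))`. -/
noncomputable def lap (G : SimpleGraph V) (f : V → ℝ) (x : V) : ℝ :=
  ∑ᶠ y ∈ G.neighborSet x, (f y - f x)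

/-- Volume control (Ahlfors `α`-regularity) with parameters `(α, cL, cU)`. -/
def VolCtrl (G : SimpleGraph V) (α cL cU : ℝ) : Prop :=
  ∀ x : V, ∀ r : ℝ, 1 ≤ r →
    cL * r ^ α ≤ ((gball G x r).ncard : ℝ) ∧ ((gball G x r).ncard : ℝ) ≤ cU * r ^ α

/-- Degree-weighted average of `f` over a set `S`. -/
noncomputable def wavg (G : SimpleGraph V) (S : Set V) (f : V → ℝ) : ℝ :=
  (∑ᶠ z ∈ S, f z * ndeg G z) / ∑ᶠ z ∈ S, ndeg G z

/-- The Dirichlet-type energy `Σ_{z,w∈S, z∼w} (f z - f w)²` (over ordered pairs). -/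
noncomputable def pairEnergy (G : SimpleGraph V) (S : Set V) (f : V → ℝ) : ℝ :=
  ∑ᶠ z ∈ S, ∑ᶠ w ∈ {w ∈ S | G.Adj z w}, (f z - f w) ^ 2

/-- The weak Poincaré inequality with constants `(CP, lam)`. -/
def WeakPI (G : SimpleGraph V) (CP lam : ℝ) : Prop :=
  ∀ x : V, ∀ r : ℝ, 1 ≤ r → ∀ f : V → ℝ,
    (∑ᶠ z ∈ gball G x r, (f z - wavg G (gball G x r) f) ^ 2) ≤
      CP * r ^ 2 * pairEnergy G (gball G x (lam * r)) f

/-- The Dirichlet restriction `H^A` of the Jacobi operator, acting on functions. -/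
noncomputable def HAop (G : SimpleGraph V) (μ : V → V → ℝ) (Vpot : V → ℝ) (A : Set V)
    (f : V → ℝ) (x : V) : ℝ :=
  ndeg G x * f x - (∑ᶠ y ∈ {y ∈ A | G.Adj x y}, μ x y * f y) + Vpot x * f x

/-- Symmetric bond weights with values in `[0,1]`. -/
def BondWeights (G : SimpleGraph V) (μ : V → V → ℝ) : Prop :=
  ∀ x y, G.Adj x y → μ x y = μ y x ∧ 0 ≤ μ x y ∧ μ x y ≤ 1

/-- `u` is the landscape function of `H^A`: positive on `A` and solving `H^A u = 1` on `A`. -/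
def IsLandscape (G : SimpleGraph V) (μ : V → V → ℝ) (Vpot : V → ℝ) (A : Finset V)
    (u : V → ℝ) : Prop :=
  (∀ x ∈ A, 0 < u x) ∧ ∀ x ∈ A, HAop G μ Vpot (↑A) u x = 1

open Classical in
/-- The Dirichlet restriction `H^A` as a matrix indexed by `A`. -/
noncomputable def HAmat (G : SimpleGraph V) (μ : V → V → ℝ) (Vpot : V → ℝ) (A : Finset V) :
    Matrix A A ℝ := fun x y =>
  (if (x : V) = (y : V) then ndeg G (x : V) + Vpot (x : V) else 0) -
    (if G.Adj (x : V) (y : V) then μ (x : V) (y : V) else 0)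

open Classical in
/-- The integrated density of states: number of eigenvalues `≤ E` (with multiplicity),
divided by `|A|`. -/
noncomputable def NA {A : Finset V} {M : Matrix A A ℝ} (hM : M.IsHermitian) (E : ℝ) : ℝ :=
  ((Finset.univ.filter fun i => hM.eigenvalues i ≤ E).card : ℝ) / (A.card : ℝ)

/-- `Z` is the set of centers of a covering of `𝕍` by balls of radius `R`
with finite overlap constant `b`. -/
def IsCover (G : SimpleGraph V) (Z : Set V) (R b : ℝ) : Prop :=
  (∀ y : V, ∃ z ∈ Z, y ∈ gball G z R) ∧
    ∀ y : V, (({z ∈ Z | y ∈ gball G z R}).ncard : ℝ) ≤ b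

/-- The landscape counting function `N_u^{𝒫,A}(E)` for the cover with centers `Z` and radius `R`:
the number of balls `B` of the cover with `min_{x ∈ B∩A} 1/u(x) ≤ E`, divided by `|A|`. -/
noncomputable def Nu (G : SimpleGraph V) (u : V → ℝ) (A : Finset V) (Z : Set V) (R E : ℝ) : ℝ :=
  (({z ∈ Z | ∃ x ∈ A, x ∈ gball G z R ∧ 1 / u x ≤ E}).ncard : ℝ) / (A.card : ℝ)

/-- The diameter of a finite set of vertices in the graph metric. -/
noncomputable def diamA (G : SimpleGraph V) (A : Finset V) : ℝ :=
  ((A.sup fun x => A.sup fun y => G.dist x y : ℕ) : ℝ)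

/-- `A` has sufficient overlap with balls, with constant `cA`. -/
def SuffOverlap (G : SimpleGraph V) (A : Finset V) (α cA : ℝ) : Prop :=
  ∀ x ∈ A, ∀ r : ℝ, 1 ≤ r → r ≤ 4 * diamA G A →
    cA * r ^ α ≤ (((↑A : Set V) ∩ gball G x r).ncard : ℝ)

/-- The Dirichlet Laplacian `-Δ^B` of a region `B`, acting on functions:
`(-Δ^B f)(x) = deg(x) f(x) - Σ_{y ∈ B, y ∼ x} f(y)`. -/
noncomputable def negDirLap (G : SimpleGraph V) (B : Set V) (f : V → ℝ) (x : V) : ℝ :=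
  ndeg G x * f x - ∑ᶠ y ∈ {y ∈ B | G.Adj x y}, f y

/-- Exterior (vertex) boundary of a set. -/
def extBoundary (G : SimpleGraph V) (S : Set V) : Set V :=
  {x | x ∉ S ∧ ∃ y ∈ S, G.Adj x y}

/-- Ball with respect to an abstract metric `d`. -/
def dball (d : V → V → ℝ) (ξ : V) (R : ℝ) : Set V := {y | d ξ y ≤ R}

/-- The harmonic weight assumption: a metric `d` strongly equivalent (constant `c`) to the
graph metric, together with harmonic weights `h ξ R : B^d(ξ,R) → [0,1]` satisfying the
submean property for subharmonic functions (with equality for harmonic ones), and a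
uniform lower bound `c' / |B^d(ξ,R)|` off `bad' sets `X ξ R` of asymptotically
negligible proportion. -/
structure HarmonicWeight (G : SimpleGraph V) (d : V → V → ℝ) (h : V → ℝ → V → ℝ)
    (X : V → ℝ → Set V) (c c' : ℝ) : Prop where
  c_one : 1 ≤ c
  c'_pos : 0 < c'
  d_self : ∀ x, d x x = 0
  d_eq_zero : ∀ x y, d x y = 0 → x = y
  d_symm : ∀ x y, d x y = d y x
  d_triangle : ∀ x y z, d x z ≤ d x y + d y z
  d_lower : ∀ x y, c⁻¹ * (G.dist x y : ℝ) ≤ d x y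
  d_upper : ∀ x y, d x y ≤ c * (G.dist x y : ℝ)
  h_mem : ∀ ξ (R : ℝ) y, y ∈ dball d ξ R → h ξ R y ∈ Set.Icc (0 : ℝ) 1
  submean : ∀ ξ (R : ℝ), 0 < R → ∀ f : V → ℝ,
    (∀ x ∈ dball d ξ R ∪ extBoundary G (dball d ξ R), 0 ≤ lap G f x) →
    f ξ ≤ ∑ᶠ y ∈ dball d ξ R, h ξ R y * f y
  harm_eq : ∀ ξ (R : ℝ), 0 < R → ∀ f : V → ℝ,
    (∀ x ∈ dball d ξ R ∪ extBoundary G (dball d ξ R), lap G f x = 0) →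
    f ξ = ∑ᶠ y ∈ dball d ξ R, h ξ R y * f y
  X_subset : ∀ ξ (R : ℝ), X ξ R ⊆ dball d ξ R
  h_lower : ∀ ξ (R : ℝ), ∀ y ∈ dball d ξ R \ X ξ R,
    c' / ((dball d ξ R).ncard : ℝ) ≤ h ξ R y
  X_small : ∀ ε : ℝ, 0 < ε → ∃ R₀ : ℝ, ∀ R : ℝ, R₀ ≤ R → ∀ ξ : V,
    ((X ξ R).ncard : ℝ) ≤ ε * ((dball d ξ R).ncard : ℝ)

/-!
A ball of `𝒫` counted at energy `E` contains some `x ∈ A` with `1/u(x) ≤ E`; a ball of `𝒫'`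
containing `x` is then counted as well, and its centre lies within `R + R' ≤ (1 + C₀) R` of the
first one. So it suffices to bound the number of centres of `𝒫` in a ball of radius
`(1 + C₀) R`. The balls of radius `R` around them lie in the concentric ball of radius
`(2 + C₀) R`, each has at least `cL R^α` vertices, and they overlap at most `b` times, so there
are at most `b cU (2 + C₀)^α / cL` of them.
-/

theorem _root_.Set.ncard_le_mul_ncard_of_subset_biUnion {α ι : Type*} {s : Set α} {t : Set ι}
    {f : ι → Set α} {K : ℝ} (ht : t.Finite) (hf : ∀ i ∈ t, (f i).Finite)
    (hK : ∀ i ∈ t, ((f i).ncard : ℝ) ≤ K) (hs : s ⊆ ⋃ i ∈ t, f i) :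
    (s.ncard : ℝ) ≤ K * t.ncard := by
  have hunion : (⋃ i ∈ ht.toFinset, f i).ncard ≤ ∑ i ∈ ht.toFinset, (f i).ncard :=
    ht.toFinset.set_ncard_biUnion_le f
  simp only [Set.Finite.mem_toFinset] at hunion
  calc (s.ncard : ℝ) ≤ ((⋃ i ∈ t, f i).ncard : ℝ) := by
        exact_mod_cast Set.ncard_le_ncard hs (ht.biUnion hf)
    _ ≤ ∑ i ∈ ht.toFinset, ((f i).ncard : ℝ) := by exact_mod_cast hunion
    _ ≤ ∑ _i ∈ ht.toFinset, K := Finset.sum_le_sum fun i hi => hK i (by simpa using hi)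
    _ = K * t.ncard := by
        rw [Finset.sum_const, nsmul_eq_mul, mul_comm, Set.ncard_eq_toFinset_card t ht]

section Cover

variable {G : SimpleGraph V}

/-- The centres of the balls counted by `Nu G u A Z R E`. -/
def activeCenters (G : SimpleGraph V) (u : V → ℝ) (A : Finset V) (Z : Set V) (R E : ℝ) :
    Set V :=
  {z ∈ Z | ∃ x ∈ A, x ∈ gball G z R ∧ 1 / u x ≤ E}

lemma gball_mono (G : SimpleGraph V) (x : V) {r r' : ℝ} (h : r ≤ r') :
    gball G x r ⊆ gball G x r' := fun _ hy => ⟨hy.1, hy.2.trans h⟩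

lemma mem_gball_comm {x y : V} {r : ℝ} : y ∈ gball G x r ↔ x ∈ gball G y r := by
  simp only [gball, Set.mem_ofPred_eq, SimpleGraph.reachable_comm, SimpleGraph.dist_comm]

lemma mem_gball_add_of_mem_of_mem {x z z' : V} {r r' : ℝ} (h : x ∈ gball G z r)
    (h' : x ∈ gball G z' r') : z ∈ gball G z' (r' + r) := by
  refine ⟨h'.1.trans h.1.symm, ?_⟩
  have htri : G.dist z' z ≤ G.dist z' x + G.dist x z := h'.1.dist_triangle_left z
  have hxz : (G.dist x z : ℝ) ≤ r := by rw [SimpleGraph.dist_comm]; exact h.2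
  calc (G.dist z' z : ℝ) ≤ G.dist z' x + G.dist x z := by exact_mod_cast htri
    _ ≤ r' + r := add_le_add h'.2 hxz

lemma VolCtrl.finite_gball {α cL cU : ℝ} (hvol : VolCtrl G α cL cU) (hcL : 0 < cL) (x : V)
    (r : ℝ) : (gball G x r).Finite := by
  refine (Set.finite_of_ncard_pos ?_).subset (gball_mono G x (le_max_left r 1))
  have hpos : 0 < cL * max r 1 ^ α := by positivity
  exact_mod_cast hpos.trans_le (hvol x (max r 1) (le_max_right r 1)).1

lemma IsCover.overlap_nonneg {Z : Set V} {R b : ℝ} (hZ : IsCover G Z R b) (y : V) : 0 ≤ b :=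
  (Nat.cast_nonneg _).trans (hZ.2 y)

lemma IsCover.ncard_inter_gball_mul_le {α cL cU R b ρ : ℝ} {Z : Set V} (hZ : IsCover G Z R b)
    (hvol : VolCtrl G α cL cU) (hcL : 0 < cL) (hR : 1 ≤ R) (hρ : 0 ≤ ρ) (z₀ : V) :
    (Z ∩ gball G z₀ ρ).ncard * (cL * R ^ α) ≤ cU * (R + ρ) ^ α * b := by
  classical
  have hfin := hvol.finite_gball hcL
  set s := ((hfin z₀ ρ).subset Set.inter_subset_right).toFinset with hs
  set t := (hfin z₀ (R + ρ)).toFinset with ht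
  have hball :
      ∀ z ∈ s, cL * R ^ α ≤ (t.bipartiteAbove (fun z y => y ∈ gball G z R) z).card := by
    intro z hz
    have hsub : gball G z R ⊆ ↑(t.bipartiteAbove (fun z y => y ∈ gball G z R) z) := by
      intro y hy
      have hz₀ : z ∈ gball G z₀ ρ := ((Set.Finite.mem_toFinset _).mp hz).2
      have hy₀ := mem_gball_add_of_mem_of_mem (mem_gball_comm.mp hy) hz₀
      simp only [Finset.bipartiteAbove, Finset.coe_filter, ht, Set.Finite.mem_toFinset]
      exact ⟨gball_mono G z₀ (by linarith) hy₀, hy⟩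
    calc cL * R ^ α ≤ (gball G z R).ncard := (hvol z R hR).1
      _ ≤ _ := by
        rw [← Set.ncard_coe_finset]
        exact_mod_cast Set.ncard_le_ncard hsub (Finset.finite_toSet _)
  have hoverlap :
      ∀ y ∈ t, ((s.bipartiteBelow (fun z y => y ∈ gball G z R) y).card : ℝ) ≤ b := by
    intro y _
    have hsub : ↑(s.bipartiteBelow (fun z y => y ∈ gball G z R) y) ⊆
        {z ∈ Z | y ∈ gball G z R} := by
      intro z hz
      simp only [Finset.bipartiteBelow, Finset.coe_filter, hs, Set.Finite.mem_toFinset] at hz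
      exact ⟨hz.1.1, hz.2⟩
    have hfin' : {z ∈ Z | y ∈ gball G z R}.Finite :=
      (hfin y R).subset fun z hz => mem_gball_comm.mp hz.2
    calc _ ≤ ({z ∈ Z | y ∈ gball G z R}.ncard : ℝ) := by
          rw [← Set.ncard_coe_finset]
          exact_mod_cast Set.ncard_le_ncard hsub hfin'
      _ ≤ b := hZ.2 y
  -- double counting of the pairs `(z, y)` with `z ∈ s` and `y ∈ gball G z R`
  have hcount := Finset.card_nsmul_le_card_nsmul _ hball hoverlap
  rw [nsmul_eq_mul, nsmul_eq_mul] at hcount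
  have hvolume : (t.card : ℝ) ≤ cU * (R + ρ) ^ α := by
    rw [ht, ← Set.ncard_eq_toFinset_card _ (hfin z₀ (R + ρ))]
    exact (hvol z₀ (R + ρ) (by linarith)).2
  rw [Set.ncard_eq_toFinset_card _ ((hfin z₀ ρ).subset Set.inter_subset_right), ← hs]
  calc _ ≤ (t.card : ℝ) * b := hcount
    _ ≤ _ := mul_le_mul_of_nonneg_right hvolume (hZ.overlap_nonneg z₀)

lemma IsCover.ncard_inter_gball_le {α cL cU R b c ρ : ℝ} {Z : Set V} (hZ : IsCover G Z R b)
    (hvol : VolCtrl G α cL cU) (hcL : 0 < cL) (hR : 1 ≤ R) (hc : 0 ≤ c) (hρ : ρ ≤ c * R)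
    (z₀ : V) : ((Z ∩ gball G z₀ ρ).ncard : ℝ) ≤ cU / cL * (1 + c) ^ α * b := by
  have hRα : 0 < R ^ α := by positivity
  have hsub : Z ∩ gball G z₀ ρ ⊆ Z ∩ gball G z₀ (c * R) :=
    Set.inter_subset_inter_right Z (gball_mono G z₀ hρ)
  have hmono : ((Z ∩ gball G z₀ ρ).ncard : ℝ) ≤ (Z ∩ gball G z₀ (c * R)).ncard := by
    exact_mod_cast Set.ncard_le_ncard hsub ((hvol.finite_gball hcL z₀ _).inter_of_right Z)
  have hmul := hZ.ncard_inter_gball_mul_le hvol hcL hR (ρ := c * R) (by positivity) z₀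
  rw [show R + c * R = (1 + c) * R by ring, Real.mul_rpow (by positivity) (by positivity)] at hmul
  have hcount : ((Z ∩ gball G z₀ (c * R)).ncard : ℝ) * cL ≤ cU * (1 + c) ^ α * b :=
    le_of_mul_le_mul_right (by linarith) hRα
  rw [div_mul_eq_mul_div, div_mul_eq_mul_div, le_div_iff₀ hcL]
  nlinarith

lemma activeCenters_finite {α cL cU : ℝ} (hvol : VolCtrl G α cL cU) (hcL : 0 < cL)
    (u : V → ℝ) (A : Finset V) (Z : Set V) (R E : ℝ) :
    (activeCenters G u A Z R E).Finite := by
  refine (A.finite_toSet.biUnion fun x _ => hvol.finite_gball hcL x R).subset ?_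
  rintro z ⟨-, x, hxA, hxz, -⟩
  exact Set.mem_biUnion hxA (mem_gball_comm.mp hxz)

lemma activeCenters_subset_biUnion {u : V → ℝ} {A : Finset V} {Z Z' : Set V} {R R' E : ℝ}
    (hZ' : ∀ y : V, ∃ z ∈ Z', y ∈ gball G z R') :
    activeCenters G u A Z R E ⊆
      ⋃ z' ∈ activeCenters G u A Z' R' E, Z ∩ gball G z' (R' + R) := by
  rintro z ⟨hz, x, hxA, hxz, hxE⟩
  obtain ⟨z', hz', hxz'⟩ := hZ' x
  exact Set.mem_biUnion ⟨hz', x, hxA, hxz', hxE⟩ ⟨hz, mem_gball_add_of_mem_of_mem hxz hxz'⟩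

end Cover

theorem partition_comparison_general
    {V : Type*}
    (G : SimpleGraph V)
    (α cL cU : ℝ) (hα : 1 ≤ α) (hcL : 0 < cL) (hcU : 0 < cU)
    (hvol : VolCtrl G α cL cU) :
    ∃ C : ℝ, 0 < C ∧
      ∀ (R R' C₀ b : ℝ), 1 ≤ R → 0 < C₀ → R' ≤ C₀ * R →
        ∀ Z Z' : Set V, IsCover G Z R b →
          (∀ y : V, ∃ z ∈ Z', y ∈ gball G z R') →
          ∀ (A : Finset V), A.Nonempty →
            ∀ (μ : V → V → ℝ) (Vpot : V → ℝ), BondWeights G μ → (∀ x, 0 ≤ Vpot x) →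
              ∀ u : V → ℝ, IsLandscape G μ Vpot A u →
                ∀ E : ℝ,
                  Nu G u A Z R E ≤ C * (1 + C₀) ^ α * b * Nu G u A Z' R' E := by
  refine ⟨2 ^ α * cU / cL, by positivity, ?_⟩
  intro R R' C₀ b hR hC₀ hR' Z Z' hZ hZ' A _ _ _ _ _ u _ E
  have hfiber : ∀ z' ∈ activeCenters G u A Z' R' E,
      ((Z ∩ gball G z' (R' + R)).ncard : ℝ) ≤ 2 ^ α * cU / cL * (1 + C₀) ^ α * b := by
    intro z' _
    have hpow : (1 + (1 + C₀)) ^ α ≤ 2 ^ α * (1 + C₀) ^ α := by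
      rw [← Real.mul_rpow (by norm_num) (by positivity)]
      exact Real.rpow_le_rpow (by positivity) (by linarith) (by linarith)
    calc ((Z ∩ gball G z' (R' + R)).ncard : ℝ)
        ≤ cU / cL * (1 + (1 + C₀)) ^ α * b :=
          hZ.ncard_inter_gball_le hvol hcL hR (by positivity) (by linarith) z'
      _ ≤ cU / cL * (2 ^ α * (1 + C₀) ^ α) * b := by
          have := hZ.overlap_nonneg z'
          gcongr
      _ = 2 ^ α * cU / cL * (1 + C₀) ^ α * b := by ring
  have hcount := Set.ncard_le_mul_ncard_of_subset_biUnion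
    (activeCenters_finite hvol hcL u A Z' R' E)
    (fun z' _ => (hvol.finite_gball hcL z' _).inter_of_right Z) hfiber
    (activeCenters_subset_biUnion hZ')
  rw [Nu, Nu, mul_div_assoc']
  exact div_le_div_of_nonneg_right hcount (Nat.cast_nonneg _)

/-- **Partition comparison** (Lemma 2.6).  There is a constant `C` depending only on
`α, cL, cU` such that landscape counting functions with respect to a covering with overlap
constant `b` and radius `R ≥ 1`, and any covering of comparable radius `R' ≤ C₀·R`, are
comparable: `N_u^{𝒫,A}(E) ≤ C·(1+C₀)^α·b·N_u^{𝒫',A}(E)`. -/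
theorem partition_comparison
    {V : Type*} [Countable V] [Infinite V]
    (G : SimpleGraph V) (hconn : G.Connected)
    (α cL cU : ℝ) (hα : 1 ≤ α) (hcL : 0 < cL) (hcU : 0 < cU)
    (hvol : VolCtrl G α cL cU) :
    ∃ C : ℝ, 0 < C ∧
      ∀ (R R' C₀ b : ℝ), 1 ≤ R → 0 < C₀ → R' ≤ C₀ * R →
        ∀ Z Z' : Set V, IsCover G Z R b →
          (∀ y : V, ∃ z ∈ Z', y ∈ gball G z R') →
          ∀ (A : Finset V), A.Nonempty →
            ∀ (μ : V → V → ℝ) (Vpot : V → ℝ), BondWeights G μ → (∀ x, 0 ≤ Vpot x) →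
              ∀ u : V → ℝ, IsLandscape G μ Vpot A u →
                ∀ E : ℝ,
                  Nu G u A Z R E ≤ C * (1 + C₀) ^ α * b * Nu G u A Z' R' E :=
  partition_comparison_general G α cL cU hα hcL hcU hvol

end LandscapeGraph
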